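/- arXiv:1803.01571 — 4 statements merged into one kernel-verified Lean document; each statement's English description precedes it below -/
import Mathlib

section
/- Let T be a knowledge base and φ, ψ sentences. Then ψ ∈ Expla_T(φ) if and only if there exists a cutting C for T and φ such that Mod(T ∪ {ψ}) ≠ Triv and Mod(T ∪ {ψ}) ⊆ 𝕄 for some 𝕄 ∈ Min(C), i.e. iff there is an explanatory relation based on cuttings relating φ to ψ. -/
variable {Sen M : Type*}

/-- The class of models of a set of sentences in a satisfaction system. -/
def ModS (sat : M → Sen → Prop) (T : Set Sen) : Set M := {m | ∀ φ ∈ T, sat m φ}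

/-- The trivial models: those satisfying every sentence. -/
def TrivS (sat : M → Sen → Prop) : Set M := {m | ∀ φ : Sen, sat m φ}

/-- A cutting for a knowledge base `T` and a sentence `φ`. -/
structure IsCutting (sat : M → Sen → Prop) (T : Set Sen) (φ : Sen) (C : Set (Set M)) : Prop where
  subset_mod : ∀ A ∈ C, A ⊆ ModS sat (T ∪ {φ})
  triv_lt : ∀ A ∈ C, TrivS sat ⊂ A
  union_closed : ∀ S ⊆ C, S.Nonempty → ⋃₀ S ∈ C
  top_mem : ModS sat (T ∪ {φ}) ∈ C
  wf : C.WellFoundedOn (fun A B => A ⊂ B)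

/-- The set of ⊆-minimal elements of a family of sets. -/
def MinCut (C : Set (Set M)) : Set (Set M) := {A ∈ C | ∀ B ∈ C, ¬ B ⊂ A}

/-- The explanatory relation based on a cutting `C` (for the observation whose cutting is `C`):
`ψ` is an explanation iff `Mod(T ∪ {ψ}) ≠ Triv` and `Mod(T ∪ {ψ})` is contained in some
minimal element of `C`. -/
def ExplRel (sat : M → Sen → Prop) (T : Set Sen) (C : Set (Set M)) (ψ : Sen) : Prop :=
  ModS sat (T ∪ {ψ}) ≠ TrivS sat ∧ ∃ A ∈ MinCut C, ModS sat (T ∪ {ψ}) ⊆ A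

/-- The set of explanations of `φ` over `T`. -/
def Expla (sat : M → Sen → Prop) (T : Set Sen) (φ : Sen) : Set Sen :=
  {ψ | ModS sat (T ∪ {ψ}) ≠ TrivS sat ∧ ∀ m ∈ ModS sat (T ∪ {ψ}), sat m φ}

/-!
Every member of a cutting lies inside `Mod(T ∪ {φ})`, so a cutting-based explanation of `φ`
is an explanation. Conversely, the one-element family `{Mod(T ∪ {φ})}` is already a cutting as
soon as some explanation `ψ` exists (its nontrivial models witness `Triv ⊊ Mod(T ∪ {φ})`), and its
only member is minimal and contains `Mod(T ∪ {ψ})`.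
-/

section Explanation

variable {sat : M → Sen → Prop} {T : Set Sen} {φ ψ : Sen}

theorem trivS_subset_modS (S : Set Sen) : TrivS sat ⊆ ModS sat S :=
  fun _ hm χ _ => hm χ

theorem modS_subset_of_mem_expla (h : ψ ∈ Expla sat T φ) :
    ModS sat (T ∪ {ψ}) ⊆ ModS sat (T ∪ {φ}) := by
  rintro m hm χ (hχ | rfl)
  · exact hm χ (Or.inl hχ)
  · exact h.2 m hm

theorem trivS_ssubset_modS_of_mem_expla (h : ψ ∈ Expla sat T φ) :
    TrivS sat ⊂ ModS sat (T ∪ {φ}) :=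
  ssubset_of_subset_not_subset (trivS_subset_modS _) fun hle =>
    h.1 ((modS_subset_of_mem_expla h).trans hle |>.antisymm (trivS_subset_modS _))

theorem mem_minCut_singleton (A : Set M) : A ∈ MinCut {A} :=
  ⟨rfl, fun _ hB => hB ▸ lt_irrefl A⟩

theorem isCutting_singleton (h : TrivS sat ⊂ ModS sat (T ∪ {φ})) :
    IsCutting sat T φ {ModS sat (T ∪ {φ})} where
  subset_mod := fun _ hA => hA ▸ subset_rfl
  triv_lt := fun _ hA => hA ▸ h
  union_closed := fun S hS hne => by
    rw [hne.subset_singleton_iff.mp hS, Set.sUnion_singleton]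
    rfl
  top_mem := rfl
  wf := Set.wellFoundedOn_singleton

theorem explRel_singleton_of_mem_expla (h : ψ ∈ Expla sat T φ) :
    ExplRel sat T {ModS sat (T ∪ {φ})} ψ :=
  ⟨h.1, _, mem_minCut_singleton _, modS_subset_of_mem_expla h⟩

theorem ExplRel.mem_expla {C : Set (Set M)} (hC : IsCutting sat T φ C)
    (h : ExplRel sat T C ψ) : ψ ∈ Expla sat T φ := by
  obtain ⟨hne, A, hA, hsub⟩ := h
  exact ⟨hne, fun m hm => hC.subset_mod A hA.1 (hsub hm) φ (Or.inr rfl)⟩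

end Explanation

theorem stmt_4_general (sat : M → Sen → Prop) (T : Set Sen) (φ ψ : Sen) :
    ψ ∈ Expla sat T φ ↔
      ∃ C : Set (Set M), IsCutting sat T φ C ∧ ExplRel sat T C ψ :=
  ⟨fun h => ⟨_, isCutting_singleton (trivS_ssubset_modS_of_mem_expla h),
      explRel_singleton_of_mem_expla h⟩,
    fun ⟨_, hC, h⟩ => h.mem_expla hC⟩

theorem stmt_4 (sat : M → Sen → Prop) (T : Set Sen) (hT : T.Finite) (φ ψ : Sen) :
    ψ ∈ Expla sat T φ ↔
      ∃ C : Set (Set M), IsCutting sat T φ C ∧ ExplRel sat T C ψ :=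
  stmt_4_general sat T φ ψ
end

section
/- Let C_φ be a cutting for a knowledge base T and a sentence φ, let φ ∧ φ' be a semantic conjunction of φ and φ', and assume Mod(φ') ∩ Mod(T ∪ {φ}) ≠ Triv. Then {𝕄 ∩ Mod(φ') | 𝕄 ∈ C_φ, 𝕄 ∩ Mod(φ') ≠ Triv} is a cutting for T and φ ∧ φ'. -/
/-!
Intersecting with `Mod(φ')` maps `C_φ` onto the new family, and it commutes with unions, so
closure under unions and the top element transfer directly. For well-foundedness, every member
`B` of the image has a largest preimage `⋃ {A ∈ C_φ | A ∩ Mod(φ') ⊆ B}`, which lies in `C_φ` by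
union-closure; taking it is strictly monotone, so a descending chain of `B`s would give one in `C_φ`.
-/

variable {Sen M : Type*}

theorem ModS_union (sat : M → Sen → Prop) (S U : Set Sen) :
    ModS sat (S ∪ U) = ModS sat S ∩ ModS sat U := by
  ext m
  simp only [ModS, Set.mem_ofPred_eq, Set.mem_inter_iff, Set.mem_union, or_imp, forall_and]

theorem TrivS_subset_ModS (sat : M → Sen → Prop) (S : Set Sen) : TrivS sat ⊆ ModS sat S :=
  fun _ hm ψ _ => hm ψ

namespace Set

variable {α : Type*} {C : Set (Set α)} {P : Set α}

theorem sUnion_eq_sUnion_preimage_inter {S : Set (Set α)} (hS : S ⊆ (· ∩ P) '' C) :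
    ⋃₀ S = ⋃₀ {A ∈ C | A ∩ P ∈ S} ∩ P := by
  ext m
  simp only [mem_sUnion, mem_inter_iff]
  constructor
  · rintro ⟨B, hB, hm⟩
    obtain ⟨A, hA, rfl⟩ := hS hB
    exact ⟨⟨A, ⟨hA, hB⟩, hm.1⟩, hm.2⟩
  · rintro ⟨⟨A, hA, hm⟩, hmP⟩
    exact ⟨A ∩ P, hA.2, hm, hmP⟩

theorem sUnion_mem_image_inter (hU : ∀ S ⊆ C, S.Nonempty → ⋃₀ S ∈ C) {S : Set (Set α)}
    (hS : S ⊆ (· ∩ P) '' C) (hne : S.Nonempty) : ⋃₀ S ∈ (· ∩ P) '' C := by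
  obtain ⟨B, hB⟩ := hne
  obtain ⟨A, hA, rfl⟩ := hS hB
  exact ⟨_, hU {A ∈ C | A ∩ P ∈ S} (fun _ h => h.1) ⟨A, hA, hB⟩,
    (sUnion_eq_sUnion_preimage_inter hS).symm⟩

theorem WellFoundedOn.image_inter (hwf : C.WellFoundedOn (· ⊂ ·))
    (hU : ∀ S ⊆ C, S.Nonempty → ⋃₀ S ∈ C) : ((· ∩ P) '' C).WellFoundedOn (· ⊂ ·) := by
  set F : Set α → Set α := fun B => ⋃₀ {A ∈ C | A ∩ P ⊆ B}
  have hF : ∀ B ∈ (· ∩ P) '' C, F B ∈ C ∧ F B ∩ P = B := by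
    rintro _ ⟨A, hA, rfl⟩
    refine ⟨hU _ (fun _ h => h.1) ⟨A, hA, subset_rfl⟩, subset_antisymm ?_ ?_⟩
    · rintro m ⟨⟨A', ⟨-, hA'⟩, hm⟩, hmP⟩
      exact hA' ⟨hm, hmP⟩
    · exact inter_subset_inter_left _ (subset_sUnion_of_mem ⟨hA, subset_rfl⟩)
  have hFwf : ((· ∩ P) '' C).WellFoundedOn (Function.onFun (· ⊂ ·) F) :=
    wellFoundedOn_image.mp (hwf.subset (by rintro _ ⟨B, hB, rfl⟩; exact (hF B hB).1))
  refine hFwf.mono' fun B hB B' hB' hlt => ?_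
  have hle : F B ⊆ F B' := sUnion_mono fun A hA => ⟨hA.1, hA.2.trans hlt.1⟩
  refine hle.ssubset_of_ne fun heq => hlt.ne ?_
  rw [← (hF B hB).2, ← (hF B' hB').2, heq]

end Set

theorem IsCutting.restrict {sat : M → Sen → Prop} {T : Set Sen} {φ χ : Sen} {C : Set (Set M)}
    {P : Set M} (hC : IsCutting sat T φ C) (hχ : ModS sat (T ∪ {χ}) = ModS sat (T ∪ {φ}) ∩ P)
    (hne : ModS sat (T ∪ {φ}) ∩ P ≠ TrivS sat) :
    IsCutting sat T χ {B | ∃ A ∈ C, B = A ∩ P ∧ A ∩ P ≠ TrivS sat} := by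
  have hsub_image : {B | ∃ A ∈ C, B = A ∩ P ∧ A ∩ P ≠ TrivS sat} ⊆ (· ∩ P) '' C :=
    fun _ ⟨A, hA, hB, _⟩ => ⟨A, hA, hB.symm⟩
  have htriv_P : TrivS sat ⊆ P := by
    have := TrivS_subset_ModS sat (T ∪ {χ})
    rw [hχ] at this
    exact this.trans Set.inter_subset_right
  have htriv_lt : ∀ B ∈ {B | ∃ A ∈ C, B = A ∩ P ∧ A ∩ P ≠ TrivS sat}, TrivS sat ⊂ B := by
    rintro _ ⟨A, hA, rfl, hAP⟩
    exact (Set.subset_inter (hC.triv_lt A hA).1 htriv_P).ssubset_of_ne (Ne.symm hAP)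
  refine ⟨?_, htriv_lt, ?_, ⟨_, hC.top_mem, hχ, hne⟩,
    (hC.wf.image_inter hC.union_closed).subset hsub_image⟩
  · rintro _ ⟨A, hA, rfl, -⟩
    rw [hχ]
    exact Set.inter_subset_inter_left _ (hC.subset_mod A hA)
  · intro S hS hSne
    obtain ⟨A, hA, hAP⟩ := Set.sUnion_mem_image_inter hC.union_closed (hS.trans hsub_image) hSne
    obtain ⟨B, hB⟩ := hSne
    refine ⟨A, hA, hAP.symm, fun htriv => (htriv_lt B (hS hB)).not_subset ?_⟩
    rw [← htriv, show A ∩ P = ⋃₀ S from hAP]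
    exact Set.subset_sUnion_of_mem hB

theorem stmt_7_general (sat : M → Sen → Prop) (T : Set Sen)
    (φ φ' χ : Sen) (Cφ : Set (Set M)) (hC : IsCutting sat T φ Cφ)
    (hconj : ModS sat {χ} = ModS sat {φ} ∩ ModS sat {φ'})
    (h2 : ModS sat {φ'} ∩ ModS sat (T ∪ {φ}) ≠ TrivS sat) :
    IsCutting sat T χ
      {B | ∃ A ∈ Cφ, B = A ∩ ModS sat {φ'} ∧ A ∩ ModS sat {φ'} ≠ TrivS sat} := by
  refine hC.restrict ?_ (by rwa [Set.inter_comm])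
  rw [ModS_union, ModS_union, hconj, Set.inter_assoc]

theorem stmt_7 (sat : M → Sen → Prop) (T : Set Sen) (hT : T.Finite)
    (φ φ' χ : Sen) (Cφ : Set (Set M)) (hC : IsCutting sat T φ Cφ)
    (hconj : ModS sat {χ} = ModS sat {φ} ∩ ModS sat {φ'})
    (h2 : ModS sat {φ'} ∩ ModS sat (T ∪ {φ}) ≠ TrivS sat) :
    IsCutting sat T χ
      {B | ∃ A ∈ Cφ, B = A ∩ ModS sat {φ'} ∧ A ∩ ModS sat {φ'} ≠ TrivS sat} :=
  stmt_7_general sat T φ φ' χ Cφ hC hconj h2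
end

section
/- Let C_{φ∨φ'} be a cutting for a knowledge base T and a semantic disjunction φ ∨ φ', and assume that Triv ⊊ 𝕄 ∩ Mod(φ) for every 𝕄 ∈ C_{φ∨φ'}. Then C_φ = {𝕄 ∩ Mod(φ) | 𝕄 ∈ C_{φ∨φ'}} is a cutting for T and φ, and if φ ▷ ψ (with respect to C_φ) then φ ∨ φ' ▷ ψ (with respect to C_{φ∨φ'}). -/
/-! Passing to traces `A ∩ Mod(φ)` preserves closure under nonempty unions, and it preserves
well-foundedness because `D ↦ ⋃ {A ∈ C | A ∩ Mod(φ) ⊆ D}` is a strictly monotone section of the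
trace map. If `A₀ ∩ Mod(φ)` is minimal among the traces, any minimal `A ⊆ A₀` of `C` has the same
trace, so an explanation contained in `A₀ ∩ Mod(φ)` is contained in `A`. -/

variable {Sen M : Type*}

open Set

section Trace

variable {α : Type*} {C : Set (Set α)} {A B D : Set α}

def SUnionClosed (C : Set (Set α)) : Prop := ∀ S ⊆ C, S.Nonempty → ⋃₀ S ∈ C

def traceLift (C : Set (Set α)) (B D : Set α) : Set α := ⋃₀ {A ∈ C | A ∩ B ⊆ D}

theorem traceLift_mono {D₁ D₂ : Set α} (h : D₁ ⊆ D₂) : traceLift C B D₁ ⊆ traceLift C B D₂ :=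
  sUnion_subset_sUnion fun _ hA => ⟨hA.1, hA.2.trans h⟩

theorem SUnionClosed.traceLift_mem (hC : SUnionClosed C) (hD : D ∈ (· ∩ B) '' C) :
    traceLift C B D ∈ C ∧ traceLift C B D ∩ B = D := by
  obtain ⟨A₀, hA₀, rfl⟩ := hD
  have hA₀mem : A₀ ∈ {A ∈ C | A ∩ B ⊆ A₀ ∩ B} := ⟨hA₀, subset_rfl⟩
  refine ⟨hC _ (fun _ hA => hA.1) ⟨A₀, hA₀mem⟩, subset_antisymm ?_ ?_⟩
  · rintro x ⟨⟨A, hA, hxA⟩, hxB⟩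
    exact hA.2 ⟨hxA, hxB⟩
  · exact inter_subset_inter_left _ (subset_sUnion_of_mem hA₀mem)

theorem SUnionClosed.image_inter (hC : SUnionClosed C) (B : Set α) :
    SUnionClosed ((· ∩ B) '' C) := by
  intro S hS hne
  have hS₀ : (· ∩ B) '' (C ∩ (· ∩ B) ⁻¹' S) = S := by
    rw [image_inter_preimage, inter_eq_right.2 hS]
  rw [← hS₀] at hne ⊢
  refine ⟨_, hC _ inter_subset_left hne.of_image, ?_⟩
  rw [sUnion_image, sUnion_eq_biUnion]
  exact iUnion₂_inter _ _

theorem SUnionClosed.wellFoundedOn_image_inter (hC : SUnionClosed C)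
    (hwf : C.WellFoundedOn (· ⊂ ·)) (B : Set α) : ((· ∩ B) '' C).WellFoundedOn (· ⊂ ·) := by
  refine (hwf.mapsTo (traceLift C B) fun D hD => (hC.traceLift_mem hD).1).mono' ?_
  intro D₁ h₁ D₂ h₂ hlt
  refine ⟨traceLift_mono hlt.1, fun hback => hlt.2 ?_⟩
  rw [← (hC.traceLift_mem h₁).2, ← (hC.traceLift_mem h₂).2]
  exact inter_subset_inter_left _ hback

theorem exists_mem_minCut_subset (hwf : C.WellFoundedOn (· ⊂ ·)) (hA : A ∈ C) :
    ∃ A' ∈ MinCut C, A' ⊆ A := by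
  obtain ⟨A', ⟨hA'C, hA'A⟩, hmin⟩ :=
    (hwf.subset (sep_subset C (· ⊆ A))).exists_minimal ⟨A, hA, subset_rfl⟩
  exact ⟨A', ⟨hA'C, fun B hB hBA' => hBA'.2 (hmin ⟨hB, hBA'.1.trans hA'A⟩ hBA'.1)⟩, hA'A⟩

end Trace

theorem modS_union (sat : M → Sen → Prop) (S T : Set Sen) :
    ModS sat (S ∪ T) = ModS sat S ∩ ModS sat T := by
  ext m
  simp only [ModS, mem_union, or_imp, forall_and, mem_ofPred_eq, mem_inter_iff]

theorem IsCutting.image_inter {sat : M → Sen → Prop} {T : Set Sen} {φ χ : Sen}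
    {C : Set (Set M)} (hC : IsCutting sat T χ C) (hφχ : ModS sat {φ} ⊆ ModS sat {χ})
    (h : ∀ A ∈ C, TrivS sat ⊂ A ∩ ModS sat {φ}) :
    IsCutting sat T φ ((· ∩ ModS sat {φ}) '' C) := by
  have htop : ModS sat (T ∪ {χ}) ∩ ModS sat {φ} = ModS sat (T ∪ {φ}) := by
    rw [modS_union, modS_union, inter_assoc, inter_eq_right.2 hφχ]
  exact
    { subset_mod := forall_mem_image.2 fun A hA =>
        htop ▸ inter_subset_inter_left _ (hC.subset_mod A hA)
      triv_lt := forall_mem_image.2 h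
      union_closed := SUnionClosed.image_inter hC.union_closed _
      top_mem := ⟨_, hC.top_mem, htop⟩
      wf := SUnionClosed.wellFoundedOn_image_inter hC.union_closed hC.wf _ }

theorem explRel_of_explRel_image_inter {sat : M → Sen → Prop} {T : Set Sen} {C : Set (Set M)}
    {ψ : Sen} (hwf : C.WellFoundedOn (· ⊂ ·)) (B : Set M) :
    ExplRel sat T ((· ∩ B) '' C) ψ → ExplRel sat T C ψ := by
  rintro ⟨hne, _, ⟨⟨A₀, hA₀, rfl⟩, hmin⟩, hsub⟩
  obtain ⟨A, hAmin, hAA₀⟩ := exists_mem_minCut_subset hwf hA₀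
  have htrace : A ∩ B = A₀ ∩ B := by
    by_contra hne'
    exact hmin _ ⟨A, hAmin.1, rfl⟩ (ssubset_of_subset_of_ne (inter_subset_inter_left _ hAA₀) hne')
  exact ⟨hne, A, hAmin, hsub.trans (htrace.ge.trans inter_subset_left)⟩

theorem stmt_11_general (sat : M → Sen → Prop) (T : Set Sen)
    (φ φ' χ ψ : Sen) (C : Set (Set M))
    (hdisj : ModS sat {χ} = ModS sat {φ} ∪ ModS sat {φ'})
    (hC : IsCutting sat T χ C)
    (h : ∀ A ∈ C, TrivS sat ⊂ A ∩ ModS sat {φ}) :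
    IsCutting sat T φ ((fun A => A ∩ ModS sat {φ}) '' C) ∧
      (ExplRel sat T ((fun A => A ∩ ModS sat {φ}) '' C) ψ → ExplRel sat T C ψ) :=
  ⟨hC.image_inter (hdisj ▸ subset_union_left) h, explRel_of_explRel_image_inter hC.wf _⟩

theorem stmt_11 (sat : M → Sen → Prop) (T : Set Sen) (hT : T.Finite)
    (φ φ' χ ψ : Sen) (C : Set (Set M))
    (hdisj : ModS sat {χ} = ModS sat {φ} ∪ ModS sat {φ'})
    (hC : IsCutting sat T χ C)
    (h : ∀ A ∈ C, TrivS sat ⊂ A ∩ ModS sat {φ}) :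
    IsCutting sat T φ ((fun A => A ∩ ModS sat {φ}) '' C) ∧
      (ExplRel sat T ((fun A => A ∩ ModS sat {φ}) '' C) ψ → ExplRel sat T C ψ) :=
  stmt_11_general sat T φ φ' χ ψ C hdisj hC h
end

section
/- Let C_φ and C_{φ'} be cuttings for a knowledge base T and sentences φ and φ' respectively, both totally ordered by inclusion, let φ ∨ φ' be a semantic disjunction, and take C_φ ⊕ C_{φ'} = {A ∪ B | A ∈ C_φ, B ∈ C_{φ'}} as the cutting for T and φ ∨ φ'. If φ ▷ ψ (with respect to C_φ) or φ' ▷ ψ (with respect to C_{φ'}), then φ ∨ φ' ▷ ψ (with respect to C_φ ⊕ C_{φ'}). (Strengthened disjunctive rationality E-DR.) -/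
variable {Sen M : Type*}

/-! Minimality in the sum of two chains is componentwise: since each chain has a least element,
the union of the two least elements lies below every union `A ∪ B`. Hence an explanation
contained in a minimal element of one cutting is contained in a minimal element of the sum. -/

theorem minCut_nonempty_of_wellFoundedOn {C : Set (Set M)} (hwf : C.WellFoundedOn (· ⊂ ·))
    (hne : C.Nonempty) : (MinCut C).Nonempty := by
  obtain ⟨A, hA, hmin⟩ := (Set.wellFoundedOn_iff.mp hwf).has_min C hne
  exact ⟨A, hA, fun B hB hBA => hmin B hB ⟨hBA, hB, hA⟩⟩

theorem IsCutting.minCut_nonempty {sat : M → Sen → Prop} {T : Set Sen} {φ : Sen}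
    {C : Set (Set M)} (h : IsCutting sat T φ C) : (MinCut C).Nonempty :=
  minCut_nonempty_of_wellFoundedOn h.wf ⟨_, h.top_mem⟩

theorem IsChain.subset_of_mem_minCut {C : Set (Set M)} (hC : IsChain (· ⊆ ·) C) {A B : Set M}
    (hA : A ∈ MinCut C) (hB : B ∈ C) : A ⊆ B := by
  rcases eq_or_ne A B with rfl | hne
  · exact subset_rfl
  rcases hC hA.1 hB hne with hAB | hBA
  · exact hAB
  · exact absurd (ssubset_of_subset_of_ne hBA hne.symm) (hA.2 B hB)

theorem union_mem_minCut_of_isChain {C C' : Set (Set M)} (hC : IsChain (· ⊆ ·) C)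
    (hC' : IsChain (· ⊆ ·) C') {A B : Set M} (hA : A ∈ MinCut C) (hB : B ∈ MinCut C') :
    A ∪ B ∈ MinCut {X | ∃ A ∈ C, ∃ B ∈ C', X = A ∪ B} := by
  refine ⟨⟨A, hA.1, B, hB.1, rfl⟩, ?_⟩
  rintro _ ⟨A', hA', B', hB', rfl⟩ hlt
  exact hlt.not_subset
    (Set.union_subset_union (hC.subset_of_mem_minCut hA hA') (hC'.subset_of_mem_minCut hB hB'))

theorem stmt_16_general (sat : M → Sen → Prop) (T : Set Sen)
    (φ φ' ψ : Sen) (Cφ Cφ' : Set (Set M))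
    (hCφ : IsCutting sat T φ Cφ) (hCφ' : IsCutting sat T φ' Cφ')
    (hchain : IsChain (· ⊆ ·) Cφ) (hchain' : IsChain (· ⊆ ·) Cφ')
    (h : ExplRel sat T Cφ ψ ∨ ExplRel sat T Cφ' ψ) :
    ExplRel sat T {X | ∃ A ∈ Cφ, ∃ B ∈ Cφ', X = A ∪ B} ψ := by
  rcases h with ⟨hnt, A, hA, hsub⟩ | ⟨hnt, B, hB, hsub⟩
  · obtain ⟨B, hB⟩ := hCφ'.minCut_nonempty
    exact ⟨hnt, A ∪ B, union_mem_minCut_of_isChain hchain hchain' hA hB,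
      hsub.trans Set.subset_union_left⟩
  · obtain ⟨A, hA⟩ := hCφ.minCut_nonempty
    exact ⟨hnt, A ∪ B, union_mem_minCut_of_isChain hchain hchain' hA hB,
      hsub.trans Set.subset_union_right⟩

theorem stmt_16 (sat : M → Sen → Prop) (T : Set Sen) (hT : T.Finite)
    (φ φ' χ ψ : Sen) (Cφ Cφ' : Set (Set M))
    (hCφ : IsCutting sat T φ Cφ) (hCφ' : IsCutting sat T φ' Cφ')
    (hchain : IsChain (· ⊆ ·) Cφ) (hchain' : IsChain (· ⊆ ·) Cφ')
    (hdisj : ModS sat {χ} = ModS sat {φ} ∪ ModS sat {φ'})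
    (h : ExplRel sat T Cφ ψ ∨ ExplRel sat T Cφ' ψ) :
    ExplRel sat T {X | ∃ A ∈ Cφ, ∃ B ∈ Cφ', X = A ∪ B} ψ :=
  stmt_16_general sat T φ φ' ψ Cφ Cφ' hCφ hCφ' hchain hchain' h
end
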